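/- Let 𝔤 be a finite-dimensional real unimodular almost abelian Lie algebra (i.e. 𝔤 contains an abelian ideal of codimension 1) with an integrable complex structure J. If (𝔤, J) admits a compatible inner product that is pluriclosed and a compatible inner product that is balanced, then (𝔤, J) admits a compatible inner product that is Kähler. (Fino–Paradiso: the Fino–Vezzoni conjecture for almost abelian Lie-Hermitian manifolds.) -/

import Mathlib

/-!
Let `e` be a unit normal of `b` for the balanced metric. Then `J e ∈ b`, and `b₁ = b ∩ J⁻¹ b`
is a `J`-invariant complement of `span {e, J e}` which `f = ad e` preserves and on which, by
integrability, `f` commutes with `J`. The Lee form evaluated on `b₁` and at `e`, together with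
unimodularity, forces `⁅e, J e⁆ = 0`. The pluriclosed condition at `(e, J e, z, J z)` then reads
`⟪(f + f*) z, f z⟫ = 0` on `b₁`, so `tr (f + f*)² = 2 tr ((f + f*) f) = 0` and `f` is skew for
the pluriclosed metric. Gluing that metric on `b₁` to the balanced one on `span {e, J e}` gives a
Hermitian metric with closed Kähler form: every bracket is a combination of values of `f`, and
`⟪J f ·, ·⟫` is symmetric on `b₁`.
-/

namespace LieHerm

variable {g : Type*} [LieRing g] [LieAlgebra ℝ g]

/-- `ip` is an inner product: a symmetric positive-definite bilinear form. -/
def IsInnerProduct (ip : g →ₗ[ℝ] g →ₗ[ℝ] ℝ) : Prop :=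
  (∀ x y : g, ip x y = ip y x) ∧ (∀ x : g, x ≠ 0 → 0 < ip x x)

/-- `ip` is compatible with (Hermitian with respect to) `J`. -/
def IsCompatible (ip : g →ₗ[ℝ] g →ₗ[ℝ] ℝ) (J : g →ₗ[ℝ] g) : Prop :=
  ∀ x y : g, ip (J x) (J y) = ip x y

/-- `J` is an integrable complex structure on the Lie algebra `g`. -/
def IsComplexStructure (J : g →ₗ[ℝ] g) : Prop :=
  (∀ x : g, J (J x) = -x) ∧
  (∀ x y : g, ⁅x, y⁆ - ⁅J x, J y⁆ + J ⁅J x, y⁆ + J ⁅x, J y⁆ = 0)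

/-- The Kähler form `ω(x,y) = ⟨Jx, y⟩`. -/
def omega2 (ip : g →ₗ[ℝ] g →ₗ[ℝ] ℝ) (J : g →ₗ[ℝ] g) (x y : g) : ℝ :=
  ip (J x) y

/-- The Chevalley–Eilenberg differential of the Kähler form. -/
def dOmega (ip : g →ₗ[ℝ] g →ₗ[ℝ] ℝ) (J : g →ₗ[ℝ] g) (x y z : g) : ℝ :=
  -(omega2 ip J ⁅x, y⁆ z) + omega2 ip J ⁅x, z⁆ y - omega2 ip J ⁅y, z⁆ x

/-- The Kähler condition `dω = 0`. -/
def IsKaehler (ip : g →ₗ[ℝ] g →ₗ[ℝ] ℝ) (J : g →ₗ[ℝ] g) : Prop :=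
  ∀ x y z : g, dOmega ip J x y z = 0

/-- The 3-form `σ(x,y,z) = dω(Jx,Jy,Jz)`. -/
def sigma3 (ip : g →ₗ[ℝ] g →ₗ[ℝ] ℝ) (J : g →ₗ[ℝ] g) (x y z : g) : ℝ :=
  dOmega ip J (J x) (J y) (J z)

/-- Pluriclosed (SKT): `dσ = 0` where `σ(x,y,z) = dω(Jx,Jy,Jz)`. -/
def IsPluriclosed (ip : g →ₗ[ℝ] g →ₗ[ℝ] ℝ) (J : g →ₗ[ℝ] g) : Prop :=
  ∀ x y z w : g,
    -(sigma3 ip J ⁅x, y⁆ z w) + sigma3 ip J ⁅x, z⁆ y w - sigma3 ip J ⁅x, w⁆ y z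
      - sigma3 ip J ⁅y, z⁆ x w + sigma3 ip J ⁅y, w⁆ x z - sigma3 ip J ⁅z, w⁆ x y = 0

/-- Balanced: the Lee form vanishes, i.e. for every orthonormal basis `(e_i)` one has
`∑ i, dω(e_i, J e_i, x) = 0` for all `x`. -/
def IsBalanced (ip : g →ₗ[ℝ] g →ₗ[ℝ] ℝ) (J : g →ₗ[ℝ] g) : Prop :=
  ∀ (m : ℕ) (b : Module.Basis (Fin m) ℝ g),
    (∀ i j, ip (b i) (b j) = if i = j then 1 else 0) →
    ∀ x : g, ∑ i, dOmega ip J (b i) (J (b i)) x = 0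

/-- The Levi-Civita connection of a metric Lie algebra, via the Koszul formula. -/
def IsLeviCivita (ip : g →ₗ[ℝ] g →ₗ[ℝ] ℝ) (D : g →ₗ[ℝ] g →ₗ[ℝ] g) : Prop :=
  ∀ x y z : g, 2 * ip (D x y) z = ip ⁅x, y⁆ z - ip ⁅y, z⁆ x + ip ⁅z, x⁆ y

/-- The curvature of a connection `D` on a Lie algebra. -/
def curv (D : g →ₗ[ℝ] g →ₗ[ℝ] g) (x y z : g) : g :=
  D x (D y z) - D y (D x z) - D ⁅x, y⁆ z

/-- The torsion of a connection `D` on a Lie algebra. -/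
def tor (D : g →ₗ[ℝ] g →ₗ[ℝ] g) (x y : g) : g :=
  D x y - D y x - ⁅x, y⁆

/-- `D` is the Chern connection: metric, `J`-parallel, torsion has vanishing (1,1)-part. -/
def IsChern (ip : g →ₗ[ℝ] g →ₗ[ℝ] ℝ) (J : g →ₗ[ℝ] g) (D : g →ₗ[ℝ] g →ₗ[ℝ] g) : Prop :=
  (∀ x y z : g, ip (D x y) z + ip y (D x z) = 0) ∧
  (∀ x y : g, D x (J y) = J (D x y)) ∧
  (∀ x y : g, tor D (J x) (J y) = -(tor D x y))

/-- `D` is the Bismut connection: metric, `J`-parallel, totally skew-symmetric torsion. -/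
def IsBismut (ip : g →ₗ[ℝ] g →ₗ[ℝ] ℝ) (J : g →ₗ[ℝ] g) (D : g →ₗ[ℝ] g →ₗ[ℝ] g) : Prop :=
  (∀ x y z : g, ip (D x y) z + ip y (D x z) = 0) ∧
  (∀ x y : g, D x (J y) = J (D x y)) ∧
  (∀ x y z : g, ip (tor D x y) z = -(ip (tor D x z) y))

/-- Unimodularity: `tr (ad x) = 0` for all `x`. -/
def Unimodular (g : Type*) [LieRing g] [LieAlgebra ℝ g] : Prop :=
  ∀ x : g, LinearMap.trace ℝ g (LieAlgebra.ad ℝ g x) = 0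

/-- The commutator ideal `[g,g]`, as a submodule. -/
def commutatorSubmodule (g : Type*) [LieRing g] [LieAlgebra ℝ g] : Submodule ℝ g :=
  Submodule.span ℝ {z : g | ∃ x y : g, ⁅x, y⁆ = z}

/-- `J` is nilpotent in the sense of Cordero–Fernández–Gray–Ugarte. -/
def CFGUNilpotent (J : g →ₗ[ℝ] g) : Prop :=
  ∃ (k : ℕ) (a : ℕ → Submodule ℝ g),
    a 0 = ⊥ ∧
    (∀ l : ℕ, ∀ x : g, x ∈ a (l + 1) ↔ ∀ y : g, ⁅x, y⁆ ∈ a l ∧ ⁅J x, y⁆ ∈ a l) ∧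
    a k = ⊤

section LinearAlgebra

open Module

variable {V : Type*} [AddCommGroup V] [Module ℝ V] {ip : V →ₗ[ℝ] V →ₗ[ℝ] ℝ}

def IsOrthonormal {ι : Type*} [DecidableEq ι] (ip : V →ₗ[ℝ] V →ₗ[ℝ] ℝ) (v : ι → V) : Prop :=
  ∀ i j, ip (v i) (v j) = if i = j then 1 else 0

def IsUnitNormal (ip : V →ₗ[ℝ] V →ₗ[ℝ] ℝ) (b : Submodule ℝ V) (e : V) : Prop :=
  ip e e = 1 ∧ ∀ x, x ∈ b ↔ ip e x = 0

def IsSkewOn (ip : V →ₗ[ℝ] V →ₗ[ℝ] ℝ) (W : Submodule ℝ V) (f : V →ₗ[ℝ] V) : Prop :=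
  ∀ z ∈ W, ∀ w ∈ W, ip (f z) w = -ip z (f w)

lemma exists_isOrthonormal_expansion (hsym : ∀ x y, ip x y = ip y x)
    (hpos : ∀ x, x ≠ 0 → 0 < ip x x) (W : Submodule ℝ V) [FiniteDimensional ℝ W] :
    ∃ u : Fin (finrank ℝ W) → V, (∀ i, u i ∈ W) ∧ IsOrthonormal ip u ∧
      ∀ x ∈ W, ∑ i, ip (u i) x • u i = x := by
  let core : InnerProductSpace.Core ℝ W :=
    { inner x y := ip x y
      conj_inner_symm x y := hsym y x
      re_inner_nonneg x := by
        rcases eq_or_ne x 0 with rfl | hx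
        · simp
        · exact (hpos x (by simpa using hx)).le
      add_left x y z := by simp
      smul_left x y r := by simp
      definite x hx := by
        by_contra h
        exact (hpos x (by simpa using h)).ne' hx }
  let _ : NormedAddCommGroup W := core.toNormedAddCommGroup
  let _ : InnerProductSpace ℝ W := InnerProductSpace.ofCore core.toCore
  let B := stdOrthonormalBasis ℝ W
  refine ⟨fun i => B i, fun i => (B i).2, orthonormal_iff_ite.1 B.orthonormal, fun x hx => ?_⟩
  have h := congrArg Subtype.val (B.sum_repr ⟨x, hx⟩)
  simp only [B.repr_apply_apply, Submodule.coe_sum, Submodule.coe_smul] at h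
  exact h

lemma exists_isUnitNormal [FiniteDimensional ℝ V] (hsym : ∀ x y, ip x y = ip y x)
    (hpos : ∀ x, x ≠ 0 → 0 < ip x x) (b : Submodule ℝ V)
    (hcodim : finrank ℝ V = finrank ℝ b + 1) : ∃ e, IsUnitNormal ip b e := by
  have hnd : ip.Nondegenerate :=
    ⟨fun x hx => by_contra fun h => (hpos x h).ne' (hx x),
      fun y hy => by_contra fun h => (hpos y h).ne' (hy y)⟩
  have hrank : finrank ℝ (LinearMap.BilinForm.orthogonal ip b) = 1 := by
    rw [LinearMap.BilinForm.finrank_orthogonal hnd]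
    omega
  obtain ⟨z, hzb, hz⟩ := Submodule.exists_mem_ne_zero_of_ne_bot
      (p := LinearMap.BilinForm.orthogonal ip b) fun h => by
    rw [h, finrank_bot] at hrank
    exact zero_ne_one hrank
  have hzz : 0 < ip z z := hpos z hz
  set e := (√(ip z z))⁻¹ • z
  have hee : ip e e = 1 := by
    simp only [e, map_smul, LinearMap.smul_apply, smul_eq_mul]
    field_simp
    rw [Real.sq_sqrt hzz.le]
  have hle : b ≤ LinearMap.ker (ip e) := fun y hy => by
    simp [e, hsym z y, LinearMap.BilinForm.mem_orthogonal_iff.1 hzb y hy]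
  have hne : ip e ≠ 0 := fun h => by simp [h] at hee
  have hb := Submodule.eq_of_le_of_finrank_eq hle
    (by have := Module.Dual.finrank_ker_add_one_of_ne_zero hne; omega)
  exact ⟨e, hee, fun x => by rw [hb, LinearMap.mem_ker]⟩

lemma IsOrthonormal.linearIndependent {ι : Type*} [DecidableEq ι] {v : ι → V}
    (hv : IsOrthonormal ip v) : LinearIndependent ℝ v := by
  rw [linearIndependent_iff']
  intro s c hc i hi
  have h := congrArg (ip (v i)) hc
  simpa [hv i, Finset.sum_ite_eq, hi] using h

lemma IsOrthonormal.repr_apply {ι : Type*} [Fintype ι] [DecidableEq ι] {B : Basis ι ℝ V}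
    (hB : IsOrthonormal ip B) (x : V) (i : ι) : B.repr x i = ip (B i) x := by
  conv_rhs => rw [← B.sum_repr x]
  simp only [map_sum, map_smul, smul_eq_mul, hB i, mul_ite, mul_one, mul_zero,
    Finset.sum_ite_eq, Finset.mem_univ, if_true]

lemma IsOrthonormal.trace_eq_sum {ι : Type*} [Fintype ι] [DecidableEq ι] {B : Basis ι ℝ V}
    (hB : IsOrthonormal ip B) (f : V →ₗ[ℝ] V) :
    LinearMap.trace ℝ V f = ∑ i, ip (B i) (f (B i)) := by
  simp [LinearMap.trace_eq_matrix_trace ℝ B, Matrix.trace, LinearMap.toMatrix_apply, hB.repr_apply]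

lemma IsOrthonormal.cons (hsym : ∀ x y, ip x y = ip y x) {n : ℕ} {e : V} {u : Fin n → V}
    (hu : IsOrthonormal ip u) (he : ip e e = 1) (heu : ∀ i, ip e (u i) = 0) :
    IsOrthonormal ip (Fin.cons e u : Fin (n + 1) → V) := by
  intro i j
  cases i using Fin.cases <;> cases j using Fin.cases <;>
    simp [he, heu, hsym (u _) e, hu _ _, Fin.succ_ne_zero, (Fin.succ_ne_zero _).symm]

lemma isSkewOn_of_inner_sq_add_inner_self (hsym : ∀ x y, ip x y = ip y x)
    (hpos : ∀ x, x ≠ 0 → 0 < ip x x) {W : Submodule ℝ V} [FiniteDimensional ℝ W]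
    {f : V →ₗ[ℝ] V} (hfW : ∀ z ∈ W, f z ∈ W)
    (hf : ∀ z ∈ W, ip (f (f z)) z + ip (f z) (f z) = 0) : IsSkewOn ip W f := by
  obtain ⟨u, huW, -, hexp⟩ := exists_isOrthonormal_expansion hsym hpos W
  set s : V →ₗ[ℝ] V →ₗ[ℝ] ℝ := ip.comp f + ip.compl₂ f
  have hs : ∀ a c, s a c = ip (f a) c + ip a (f c) := fun _ _ => rfl
  have hs_symm : ∀ a c, s a c = s c a := fun a c => by rw [hs, hs, hsym (f a), hsym a]; ring
  have hrow : ∀ i, ∑ j, s (u i) (u j) * ip (u j) (f (u i)) = 0 := fun i => calc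
    _ = s (u i) (∑ j, ip (u j) (f (u i)) • u j) := by simp [mul_comm]
    _ = s (f (u i)) (u i) := by rw [hexp _ (hfW _ (huW i)), hs_symm]
    _ = 0 := by rw [hs]; exact hf _ (huW i)
  have hsq : ∑ i, ∑ j, s (u i) (u j) ^ 2 = 0 := calc
    _ = ∑ i, ∑ j, s (u i) (u j) * ip (u j) (f (u i))
        + ∑ i, ∑ j, s (u j) (u i) * ip (u i) (f (u j)) := by
      rw [← Finset.sum_add_distrib]
      refine Finset.sum_congr rfl fun i _ => ?_
      rw [← Finset.sum_add_distrib]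
      refine Finset.sum_congr rfl fun j _ => ?_
      rw [hs_symm (u j), hs, hsym (f (u i))]
      ring
    _ = 0 := by
      rw [Finset.sum_comm (f := fun i j => s (u j) (u i) * ip (u i) (f (u j)))]
      simp [hrow]
  have hzero : ∀ i j, s (u i) (u j) = 0 := fun i j => by
    rw [Finset.sum_eq_zero_iff_of_nonneg fun i _ => Finset.sum_nonneg fun j _ => sq_nonneg _]
      at hsq
    exact pow_eq_zero_iff two_ne_zero |>.1 <|
      (Finset.sum_eq_zero_iff_of_nonneg fun j _ => sq_nonneg _).1
        (hsq i (Finset.mem_univ i)) j (Finset.mem_univ j)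
  intro z hz w hw
  have h : s z w = 0 := by
    rw [← hexp z hz, ← hexp w hw]
    simp [hzero]
  rw [hs] at h
  linarith

end LinearAlgebra

section Hermitian

variable {ip ip₁ ip₂ : g →ₗ[ℝ] g →ₗ[ℝ] ℝ} {J : g →ₗ[ℝ] g} {b : Submodule ℝ g} {e : g}

def complexCore (J : g →ₗ[ℝ] g) (b : Submodule ℝ g) : Submodule ℝ g :=
  b ⊓ b.comap J

lemma mem_complexCore {x : g} : x ∈ complexCore J b ↔ x ∈ b ∧ J x ∈ b :=
  Iff.rfl

lemma J_mem_complexCore (hJ2 : ∀ x, J (J x) = -x) {x : g} (hx : x ∈ complexCore J b) :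
    J x ∈ complexCore J b :=
  mem_complexCore.2 ⟨hx.2, by rw [hJ2]; exact b.neg_mem hx.1⟩

lemma IsCompatible.apply_J_left (hc : IsCompatible ip J) (hJ2 : ∀ x, J (J x) = -x) (x y : g) :
    ip (J x) y = -ip x (J y) := by
  rw [← hc (J x), hJ2, map_neg, LinearMap.neg_apply]

lemma IsCompatible.inner_self_J (hc : IsCompatible ip J) (hsym : ∀ x y, ip x y = ip y x)
    (hJ2 : ∀ x, J (J x) = -x) (x : g) : ip x (J x) = 0 := by
  have := hc.apply_J_left hJ2 x x
  rw [hsym] at this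
  linarith

lemma IsUnitNormal.J_mem (he : IsUnitNormal ip b e) (hsym : ∀ x y, ip x y = ip y x)
    (hc : IsCompatible ip J) (hJ2 : ∀ x, J (J x) = -x) : J e ∈ b :=
  (he.2 _).2 (hc.inner_self_J hsym hJ2 e)

lemma IsUnitNormal.mem_complexCore_iff (he : IsUnitNormal ip b e) (hc : IsCompatible ip J)
    (hJ2 : ∀ x, J (J x) = -x) {x : g} :
    x ∈ complexCore J b ↔ ip e x = 0 ∧ ip (J e) x = 0 := by
  rw [mem_complexCore, he.2, he.2, hc.apply_J_left hJ2, neg_eq_zero]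

def complexCoreProj (ip : g →ₗ[ℝ] g →ₗ[ℝ] ℝ) (J : g →ₗ[ℝ] g) (e : g) : g →ₗ[ℝ] g :=
  LinearMap.id - (ip e).smulRight e - (ip (J e)).smulRight (J e)

lemma complexCoreProj_apply (x : g) :
    complexCoreProj ip J e x = x - ip e x • e - ip (J e) x • J e :=
  rfl

lemma smul_add_smul_add_complexCoreProj (x : g) :
    ip e x • e + ip (J e) x • J e + complexCoreProj ip J e x = x := by
  rw [complexCoreProj_apply]
  abel

lemma complexCoreProj_J (hc : IsCompatible ip J) (hJ2 : ∀ x, J (J x) = -x) (x : g) :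
    complexCoreProj ip J e (J x) = J (complexCoreProj ip J e x) := by
  simp only [complexCoreProj_apply, map_sub, map_smul, hJ2, hc e, hc.apply_J_left hJ2 e x]
  module

lemma IsUnitNormal.complexCoreProj_mem (he : IsUnitNormal ip b e)
    (hsym : ∀ x y, ip x y = ip y x) (hc : IsCompatible ip J) (hJ2 : ∀ x, J (J x) = -x)
    (x : g) : complexCoreProj ip J e x ∈ complexCore J b := by
  have h := hc.inner_self_J hsym hJ2 e
  rw [he.mem_complexCore_iff hc hJ2, complexCoreProj_apply]
  simp only [map_sub, map_smul, smul_eq_mul, he.1, h, hsym (J e) e, hc e]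
  constructor <;> ring

lemma IsUnitNormal.complexCoreProj_of_mem (he : IsUnitNormal ip b e) (hc : IsCompatible ip J)
    (hJ2 : ∀ x, J (J x) = -x) {z : g} (hz : z ∈ complexCore J b) :
    complexCoreProj ip J e z = z := by
  obtain ⟨h₁, h₂⟩ := (he.mem_complexCore_iff hc hJ2).1 hz
  simp [complexCoreProj_apply, h₁, h₂]

def gluedForm (ip₁ ip₂ : g →ₗ[ℝ] g →ₗ[ℝ] ℝ) (P : g →ₗ[ℝ] g) : g →ₗ[ℝ] g →ₗ[ℝ] ℝ :=
  ip₁.compl₁₂ P P + ip₂.compl₁₂ (LinearMap.id - P) (LinearMap.id - P)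

lemma gluedForm_apply (P : g →ₗ[ℝ] g) (x y : g) :
    gluedForm ip₁ ip₂ P x y = ip₁ (P x) (P y) + ip₂ (x - P x) (y - P y) :=
  rfl

lemma IsInnerProduct.gluedForm (h₁ : IsInnerProduct ip₁) (h₂ : IsInnerProduct ip₂)
    (P : g →ₗ[ℝ] g) : IsInnerProduct (gluedForm ip₁ ip₂ P) := by
  have nonneg : ∀ {ip : g →ₗ[ℝ] g →ₗ[ℝ] ℝ}, IsInnerProduct ip → ∀ x, 0 ≤ ip x x :=
    fun h x => (eq_or_ne x 0).elim (fun hx => by simp [hx]) fun hx => (h.2 x hx).le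
  refine ⟨fun x y => by rw [gluedForm_apply, gluedForm_apply, h₁.1, h₂.1], fun x hx => ?_⟩
  rw [gluedForm_apply]
  by_cases hP : P x = 0
  · have := h₂.2 (x - P x) (by rwa [hP, sub_zero])
    linarith [nonneg h₁ (P x)]
  · linarith [h₁.2 _ hP, nonneg h₂ (x - P x)]

lemma IsCompatible.gluedForm (h₁ : IsCompatible ip₁ J) (h₂ : IsCompatible ip₂ J)
    {P : g →ₗ[ℝ] g} (hP : ∀ x, P (J x) = J (P x)) : IsCompatible (gluedForm ip₁ ip₂ P) J := by
  intro x y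
  rw [gluedForm_apply, gluedForm_apply, hP, hP, ← map_sub, ← map_sub, h₁, h₂]

end Hermitian

section AlmostAbelian

variable {ip : g →ₗ[ℝ] g →ₗ[ℝ] ℝ} {J : g →ₗ[ℝ] g} {b : Submodule ℝ g} {e : g}

lemma IsComplexStructure.lie_J_eq (hJ : IsComplexStructure J)
    (habel : ∀ x ∈ b, ∀ y ∈ b, ⁅x, y⁆ = (0 : g)) {x y : g} (hx : J x ∈ b)
    (hy : y ∈ complexCore J b) : ⁅x, J y⁆ = J ⁅x, y⁆ := by
  have h := hJ.2 x y
  rw [habel _ hx _ hy.2, habel _ hx _ hy.1, map_zero, sub_zero, add_zero] at h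
  have h' := congrArg J h
  rw [map_add, hJ.1, map_zero, ← sub_eq_add_neg, sub_eq_zero] at h'
  exact h'.symm

lemma IsComplexStructure.lie_mem_complexCore (hJ : IsComplexStructure J)
    (hideal : ∀ x : g, ∀ y ∈ b, ⁅x, y⁆ ∈ b) (habel : ∀ x ∈ b, ∀ y ∈ b, ⁅x, y⁆ = (0 : g))
    {x y : g} (hx : J x ∈ b) (hy : y ∈ complexCore J b) : ⁅x, y⁆ ∈ complexCore J b :=
  mem_complexCore.2 ⟨hideal x y hy.1, hJ.lie_J_eq habel hx hy ▸ hideal x _ hy.2⟩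

lemma lie_eq_smul_sub_smul (habel : ∀ x ∈ b, ∀ y ∈ b, ⁅x, y⁆ = (0 : g)) {α : g → ℝ}
    (hα : ∀ p, p - α p • e ∈ b) (p q : g) : ⁅p, q⁆ = α p • ⁅e, q⁆ - α q • ⁅e, p⁆ := by
  have h := habel _ (hα p) _ (hα q)
  simp only [sub_lie, lie_sub, smul_lie, lie_smul, lie_self, smul_zero, sub_zero] at h
  rw [← lie_skew p e] at h
  linear_combination (norm := module) h

lemma isKaehler_of_omega2_lie_symm (habel : ∀ x ∈ b, ∀ y ∈ b, ⁅x, y⁆ = (0 : g)) {α : g → ℝ}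
    (hα : ∀ p, p - α p • e ∈ b) (hsymm : ∀ a c, omega2 ip J ⁅e, a⁆ c = omega2 ip J ⁅e, c⁆ a) :
    IsKaehler ip J := by
  intro x y z
  simp only [dOmega, lie_eq_smul_sub_smul habel hα x, lie_eq_smul_sub_smul habel hα y]
  simp only [omega2, map_sub, map_smul, LinearMap.sub_apply, LinearMap.smul_apply,
    smul_eq_mul] at hsymm ⊢
  linear_combination α x * hsymm z y + α y * hsymm x z + α z * hsymm y x

end AlmostAbelian

section Balanced

variable {ip : g →ₗ[ℝ] g →ₗ[ℝ] ℝ} {J : g →ₗ[ℝ] g} {b : Submodule ℝ g} {e : g}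

def adaptedFrame (J : g →ₗ[ℝ] g) (e : g) {n : ℕ} (u : Fin n → g) : Fin (n + 2) → g :=
  Fin.cons e (Fin.cons (J e) u)

lemma IsUnitNormal.exists_basis_adaptedFrame [FiniteDimensional ℝ g] (he : IsUnitNormal ip b e)
    (hip : IsInnerProduct ip) (hc : IsCompatible ip J) (hJ2 : ∀ x, J (J x) = -x) :
    ∃ (n : ℕ) (u : Fin n → g) (B : Module.Basis (Fin (n + 2)) ℝ g),
      ⇑B = adaptedFrame J e u ∧ IsOrthonormal ip B ∧ ∀ j, u j ∈ complexCore J b := by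
  obtain ⟨u, hu, hon, hexp⟩ := exists_isOrthonormal_expansion hip.1 hip.2 (complexCore J b)
  have horth : ∀ j, ip e (u j) = 0 ∧ ip (J e) (u j) = 0 :=
    fun j => (he.mem_complexCore_iff hc hJ2).1 (hu j)
  have hv : IsOrthonormal ip (adaptedFrame J e u) := by
    refine (hon.cons hip.1 (by rw [hc]; exact he.1) fun j => (horth j).2).cons hip.1 he.1 ?_
    intro i
    cases i using Fin.cases
    · exact hc.inner_self_J hip.1 hJ2 e
    · exact (horth _).1
  have hspan : ⊤ ≤ Submodule.span ℝ (Set.range (adaptedFrame J e u)) := by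
    rintro x -
    have hmem : ∀ i, adaptedFrame J e u i ∈ Submodule.span ℝ (Set.range (adaptedFrame J e u)) :=
      fun i => Submodule.subset_span ⟨i, rfl⟩
    rw [← smul_add_smul_add_complexCoreProj (ip := ip) (J := J) (e := e) x,
      ← hexp _ (he.complexCoreProj_mem hip.1 hc hJ2 x)]
    exact add_mem (add_mem (Submodule.smul_mem _ _ (hmem 0))
      (Submodule.smul_mem _ _ (hmem (Fin.succ 0))))
      (Submodule.sum_mem _ fun j _ => Submodule.smul_mem _ _ (hmem j.succ.succ))
  exact ⟨_, u, Module.Basis.mk hv.linearIndependent hspan, Module.Basis.coe_mk _ _,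
    by rw [Module.Basis.coe_mk]; exact hv, hu⟩

lemma dOmega_self_right (x y : g) : dOmega ip J x y x = 0 := by
  simp only [dOmega, lie_self, map_zero, omega2, LinearMap.zero_apply, ← lie_skew x y,
    map_neg, LinearMap.neg_apply]
  ring

lemma sum_dOmega_adaptedFrame (hJ2 : ∀ x, J (J x) = -x) {n : ℕ} (u : Fin n → g) (x : g) :
    ∑ i, dOmega ip J (adaptedFrame J e u i) (J (adaptedFrame J e u i)) x =
      2 * dOmega ip J e (J e) x + ∑ j, dOmega ip J (u j) (J (u j)) x := by
  simp only [adaptedFrame, Fin.sum_univ_succ, Fin.cons_zero, Fin.cons_succ, hJ2]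
  simp only [dOmega, omega2, lie_neg, neg_lie, ← lie_skew (J e) e, map_neg, LinearMap.neg_apply]
  ring

lemma dOmega_self_J_of_mem_complexCore (hJ : IsComplexStructure J)
    (habel : ∀ x ∈ b, ∀ y ∈ b, ⁅x, y⁆ = (0 : g)) (hc : IsCompatible ip J) {x u : g}
    (hx : J x ∈ b) (hu : u ∈ complexCore J b) :
    dOmega ip J u (J u) x = -2 * ip ⁅x, u⁆ u := by
  have h₁ : ⁅u, J u⁆ = 0 := habel _ hu.1 _ hu.2
  have h₂ : ⁅J u, x⁆ = -J ⁅x, u⁆ := by rw [← lie_skew, hJ.lie_J_eq habel hx hu]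
  simp only [dOmega, omega2, h₁, h₂, ← lie_skew u x, map_zero, map_neg, LinearMap.zero_apply,
    LinearMap.neg_apply, hJ.1, hc ⁅x, u⁆ u]
  ring

lemma IsUnitNormal.dOmega_self_J_apply_of_mem_complexCore (he : IsUnitNormal ip b e)
    (hJ : IsComplexStructure J) (hideal : ∀ x : g, ∀ y ∈ b, ⁅x, y⁆ ∈ b)
    (habel : ∀ x ∈ b, ∀ y ∈ b, ⁅x, y⁆ = (0 : g)) (hsym : ∀ x y, ip x y = ip y x)
    (hc : IsCompatible ip J) {y : g} (hy : y ∈ complexCore J b) :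
    dOmega ip J e (J e) y = -ip (J ⁅e, J e⁆) y := by
  have hJe := he.J_mem hsym hc hJ.1
  have h₁ : ⁅J e, y⁆ = 0 := habel _ hJe _ hy.1
  have h₂ : ip (J ⁅e, y⁆) (J e) = 0 := by
    rw [hsym]
    exact ((he.mem_complexCore_iff hc hJ.1).1
      (J_mem_complexCore hJ.1 (hJ.lie_mem_complexCore hideal habel hJe hy))).2
  simp only [dOmega, omega2, h₁, h₂, map_zero, LinearMap.zero_apply]
  ring

theorem IsBalanced.lie_J_eq_zero [FiniteDimensional ℝ g] (hbal : IsBalanced ip J)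
    (hu : Unimodular g) (hJ : IsComplexStructure J) (hideal : ∀ x : g, ∀ y ∈ b, ⁅x, y⁆ ∈ b)
    (habel : ∀ x ∈ b, ∀ y ∈ b, ⁅x, y⁆ = (0 : g)) (hip : IsInnerProduct ip)
    (hc : IsCompatible ip J) (he : IsUnitNormal ip b e) : ⁅e, J e⁆ = 0 := by
  obtain ⟨n, u, B, hBu, hB, hucore⟩ := he.exists_basis_adaptedFrame hip hc hJ.1
  have hJe := he.J_mem hip.1 hc hJ.1
  have hlee : ∀ x, 2 * dOmega ip J e (J e) x + ∑ j, dOmega ip J (u j) (J (u j)) x = 0 :=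
    fun x => by rw [← sum_dOmega_adaptedFrame hJ.1, ← hBu]; exact hbal _ B hB x
  have htr_core : ∑ j, ip ⁅e, u j⁆ (u j) = 0 := by
    have h := hlee e
    rw [dOmega_self_right, Finset.sum_congr rfl fun j _ =>
      dOmega_self_J_of_mem_complexCore hJ habel hc hJe (hucore j), ← Finset.mul_sum] at h
    linarith
  have hperp : ∀ y ∈ complexCore J b, ip (J ⁅e, J e⁆) y = 0 := by
    intro y hy
    have h := hlee y
    rw [he.dOmega_self_J_apply_of_mem_complexCore hJ hideal habel hip.1 hc hy,
      Finset.sum_congr rfl fun j _ => dOmega_self_J_of_mem_complexCore hJ habel hc hy.2 (hucore j)]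
      at h
    simpa [habel _ hy.1 _ (hucore _).1] using h
  have htr : ip (J e) ⁅e, J e⁆ = 0 := by
    have h := hu e
    rw [hB.trace_eq_sum, hBu] at h
    simp only [adaptedFrame, Fin.sum_univ_succ, Fin.cons_zero, Fin.cons_succ,
      LieAlgebra.ad_apply, lie_self, map_zero, zero_add, hip.1 (u _)] at h
    linarith
  have hz : ⁅e, J e⁆ ∈ complexCore J b :=
    (he.mem_complexCore_iff hc hJ.1).2 ⟨(he.2 _).1 (hideal _ _ hJe), htr⟩
  have hJz : J ⁅e, J e⁆ = 0 :=
    by_contra fun h => (hip.2 _ h).ne' (hperp _ (J_mem_complexCore hJ.1 hz))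
  have h := hJ.1 ⁅e, J e⁆
  rwa [hJz, map_zero, eq_comm, neg_eq_zero] at h

end Balanced

section Pluriclosed

variable {ip : g →ₗ[ℝ] g →ₗ[ℝ] ℝ} {J : g →ₗ[ℝ] g} {b : Submodule ℝ g} {x : g}

lemma sigma3_J_of_mem_complexCore (hJ : IsComplexStructure J)
    (habel : ∀ x ∈ b, ∀ y ∈ b, ⁅x, y⁆ = (0 : g)) (hx : J x ∈ b) {p r : g}
    (hp : p ∈ complexCore J b) (hr : r ∈ complexCore J b) :
    sigma3 ip J p (J x) r = ip ⁅x, p⁆ (J r) - ip ⁅x, r⁆ (J p) := by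
  have h₁ : ⁅J p, J r⁆ = 0 := habel _ hp.2 _ hr.2
  have h₂ : ⁅J p, x⁆ = -J ⁅x, p⁆ := by rw [← lie_skew, hJ.lie_J_eq habel hx hp]
  simp only [sigma3, dOmega, omega2, hJ.1, lie_neg, neg_lie, h₁, h₂, hJ.lie_J_eq habel hx hr,
    map_neg, map_zero, LinearMap.neg_apply, LinearMap.zero_apply]
  ring

lemma IsPluriclosed.inner_lie_lie_add (hskt : IsPluriclosed ip J) (hJ : IsComplexStructure J)
    (hideal : ∀ x : g, ∀ y ∈ b, ⁅x, y⁆ ∈ b) (habel : ∀ x ∈ b, ∀ y ∈ b, ⁅x, y⁆ = (0 : g))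
    (hc : IsCompatible ip J) (hx : J x ∈ b) (hxJx : ⁅x, J x⁆ = 0) {z : g}
    (hz : z ∈ complexCore J b) : ip ⁅x, ⁅x, z⁆⁆ z + ip ⁅x, z⁆ ⁅x, z⁆ = 0 := by
  have hfz := hJ.lie_mem_complexCore hideal habel hx hz
  have hJz := J_mem_complexCore hJ.1 hz
  have hzero : ∀ y w, sigma3 ip J 0 y w = 0 := fun y w => by simp [sigma3, dOmega, omega2]
  have h := hskt x (J x) z (J z)
  rw [hxJx, habel _ hx _ hz.1, habel _ hx _ hJz.1, habel _ hz.1 _ hz.2, hJ.lie_J_eq habel hx hz,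
    sigma3_J_of_mem_complexCore hJ habel hx hfz hJz,
    sigma3_J_of_mem_complexCore hJ habel hx (J_mem_complexCore hJ.1 hfz) hz,
    hJ.lie_J_eq habel hx hfz, hJ.lie_J_eq habel hx hz, hJ.1, hJ.1, hc, hc] at h
  simp only [hzero, map_neg] at h
  linarith

lemma IsPluriclosed.isSkewOn_ad [FiniteDimensional ℝ g] (hskt : IsPluriclosed ip J)
    (hJ : IsComplexStructure J) (hideal : ∀ x : g, ∀ y ∈ b, ⁅x, y⁆ ∈ b)
    (habel : ∀ x ∈ b, ∀ y ∈ b, ⁅x, y⁆ = (0 : g)) (hip : IsInnerProduct ip)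
    (hc : IsCompatible ip J) (hx : J x ∈ b) (hxJx : ⁅x, J x⁆ = 0) :
    IsSkewOn ip (complexCore J b) (LieAlgebra.ad ℝ g x) :=
  isSkewOn_of_inner_sq_add_inner_self hip.1 hip.2
    (fun _ hz => hJ.lie_mem_complexCore hideal habel hx hz)
    (fun _ hz => hskt.inner_lie_lie_add hJ hideal habel hc hx hxJx hz)

end Pluriclosed

section Kaehler

variable {ip ip₁ ip₂ : g →ₗ[ℝ] g →ₗ[ℝ] ℝ} {J : g →ₗ[ℝ] g} {b : Submodule ℝ g} {x e : g}

lemma IsSkewOn.inner_J_lie_comm (hskew : IsSkewOn ip (complexCore J b) (LieAlgebra.ad ℝ g x))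
    (hJ : IsComplexStructure J) (habel : ∀ x ∈ b, ∀ y ∈ b, ⁅x, y⁆ = (0 : g))
    (hsym : ∀ x y, ip x y = ip y x) (hc : IsCompatible ip J) (hx : J x ∈ b) {z w : g}
    (hz : z ∈ complexCore J b) (hw : w ∈ complexCore J b) :
    ip (J ⁅x, z⁆) w = ip (J ⁅x, w⁆) z := calc
  ip (J ⁅x, z⁆) w = -ip ⁅x, z⁆ (J w) := hc.apply_J_left hJ.1 _ _
  _ = ip z ⁅x, J w⁆ := by
    rw [← LieAlgebra.ad_apply ℝ, hskew z hz _ (J_mem_complexCore hJ.1 hw), neg_neg,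
      LieAlgebra.ad_apply]
  _ = ip (J ⁅x, w⁆) z := by rw [hJ.lie_J_eq habel hx hw, hsym]

theorem isKaehler_gluedForm (hJ : IsComplexStructure J)
    (hideal : ∀ x : g, ∀ y ∈ b, ⁅x, y⁆ ∈ b) (habel : ∀ x ∈ b, ∀ y ∈ b, ⁅x, y⁆ = (0 : g))
    (hsym₁ : ∀ x y, ip₁ x y = ip₁ y x) (hc₁ : IsCompatible ip₁ J)
    (hsym₂ : ∀ x y, ip₂ x y = ip₂ y x) (hc₂ : IsCompatible ip₂ J) (he : IsUnitNormal ip₂ b e)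
    (h0 : ⁅e, J e⁆ = 0) (hskew : IsSkewOn ip₁ (complexCore J b) (LieAlgebra.ad ℝ g e)) :
    IsKaehler (gluedForm ip₁ ip₂ (complexCoreProj ip₂ J e)) J := by
  set P := complexCoreProj ip₂ J e
  have hJe := he.J_mem hsym₂ hc₂ hJ.1
  have hP := he.complexCoreProj_mem hsym₂ hc₂ hJ.1
  have hlie : ∀ a, ⁅e, a⁆ = ⁅e, P a⁆ := fun a => by
    conv_lhs => rw [← smul_add_smul_add_complexCoreProj (ip := ip₂) (J := J) (e := e) a]
    simp [h0, P]
  have hmem : ∀ a, J ⁅e, P a⁆ ∈ complexCore J b :=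
    fun a => J_mem_complexCore hJ.1 (hJ.lie_mem_complexCore hideal habel hJe (hP a))
  have hform : ∀ v ∈ complexCore J b, ∀ c, gluedForm ip₁ ip₂ P v c = ip₁ v (P c) :=
    fun v hv c => by
      rw [gluedForm_apply, he.complexCoreProj_of_mem hc₂ hJ.1 hv, sub_self, map_zero,
        LinearMap.zero_apply, add_zero]
  refine isKaehler_of_omega2_lie_symm habel (e := e) (α := ip₂ e) (fun p => (he.2 _).2 ?_)
    fun a c => ?_
  · simp [he.1]
  · rw [omega2, omega2, hlie a, hlie c, hform _ (hmem a), hform _ (hmem c)]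
    exact hskew.inner_J_lie_comm hJ habel hsym₁ hc₁ hJe (hP a) (hP c)

end Kaehler

theorem fino_paradiso_fino_vezzoni_almost_abelian
    {g : Type*} [LieRing g] [LieAlgebra ℝ g] [FiniteDimensional ℝ g]
    (hu : Unimodular g)
    (b : Submodule ℝ g) (hideal : ∀ x : g, ∀ y ∈ b, ⁅x, y⁆ ∈ b)
    (habel : ∀ x ∈ b, ∀ y ∈ b, ⁅x, y⁆ = (0 : g))
    (hcodim : Module.finrank ℝ g = Module.finrank ℝ b + 1)
    (J : g →ₗ[ℝ] g) (hJ : IsComplexStructure J)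
    (hskt : ∃ ip : g →ₗ[ℝ] g →ₗ[ℝ] ℝ, IsInnerProduct ip ∧ IsCompatible ip J ∧ IsPluriclosed ip J)
    (hbal : ∃ ip : g →ₗ[ℝ] g →ₗ[ℝ] ℝ, IsInnerProduct ip ∧ IsCompatible ip J ∧ IsBalanced ip J) :
    ∃ ip : g →ₗ[ℝ] g →ₗ[ℝ] ℝ, IsInnerProduct ip ∧ IsCompatible ip J ∧ IsKaehler ip J := by
  obtain ⟨ip₁, hip₁, hc₁, hskt₁⟩ := hskt
  obtain ⟨ip₂, hip₂, hc₂, hbal₂⟩ := hbal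
  obtain ⟨e, he⟩ := exists_isUnitNormal hip₂.1 hip₂.2 b hcodim
  have hJe := he.J_mem hip₂.1 hc₂ hJ.1
  have h0 : ⁅e, J e⁆ = 0 := hbal₂.lie_J_eq_zero hu hJ hideal habel hip₂ hc₂ he
  have hskew := hskt₁.isSkewOn_ad hJ hideal habel hip₁ hc₁ hJe h0
  exact ⟨_, hip₁.gluedForm hip₂ _, hc₁.gluedForm hc₂ (complexCoreProj_J hc₂ hJ.1),
    isKaehler_gluedForm hJ hideal habel hip₁.1 hc₁ hip₂.1 hc₂ he h0 hskew⟩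

end LieHerm
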